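/- arXiv:1409.5023 — 2 statements merged into one kernel-verified Lean document; each statement's English description precedes it below -/
import Mathlib

section
/- Fix a real constant a with 0 < a < 1/4. On any open interval of v where −av² + v − 1 > 0 and −av − 2a + 1 ≠ 0 and 2av² − 2v + 2 ≠ 0, the function G(v) = (1/(2v))√(−av² + v − 1) − (1/v)·arctan(√(−av² + v − 1)) − (a/2)·arctan(2a√(−av² + v − 1)/(−av − 2a + 1)) + ((2a−1)/4)·arctan((v−2)√(−av² + v − 1)/(2av² − 2v + 2)) is an antiderivative of v ↦ (1/v²)·arctan(√(−av² + v − 1)). -/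
open Real

/-!
Write `Q v = -a v² + v - 1` and `s = √(Q v)`, so that `1 + s² = v (1 - a v)`. Differentiating
`arctan (f / g)` as `(f' g - f g') / (f² + g²)`, the two last arctangents have derivatives
`a / ((1 - a v) s)` and `-1 / (v s)`: their `f² + g²` factor as `(1 - 4a) (1 - a v)²` and
`(1 - 4a) v² s²`, and the numerators carry the same factor `1 - 4a`. Summing up, everything but
`arctan s / v²` cancels once `s²` is replaced by `Q v`.
-/

theorem hasDerivAt_arctan_div {f g : ℝ → ℝ} {f' g' x : ℝ} (hf : HasDerivAt f f' x)
    (hg : HasDerivAt g g' x) (hx : g x ≠ 0) :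
    HasDerivAt (fun y => arctan (f y / g y)) ((f' * g x - f x * g') / (g x ^ 2 + f x ^ 2)) x :=
  (hf.div hg hx).arctan.congr_deriv (by simp only [Pi.div_apply]; field_simp)

section Quadratic

variable (a v : ℝ)

theorem mul_one_sub_mul_pos (hpos : 0 < -a*v^2 + v - 1) : 0 < v * (1 - a*v) := by
  nlinarith

theorem hasDerivAt_quadratic : HasDerivAt (fun x => -a*x^2 + x - 1) (1 - 2*a*v) v :=
  ((((hasDerivAt_pow 2 v).const_mul (-a)).add (hasDerivAt_id' v)).sub_const 1).congr_deriv
    (by ring)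

theorem hasDerivAt_sqrt_quadratic (hpos : 0 < -a*v^2 + v - 1) :
    HasDerivAt (fun x => √(-a*x^2 + x - 1)) ((1 - 2*a*v) / (2 * √(-a*v^2 + v - 1))) v :=
  (hasDerivAt_quadratic a v).sqrt hpos.ne'

theorem hasDerivAt_arctan_sqrt_quadratic_div_linear (hpos : 0 < -a*v^2 + v - 1)
    (h1 : -a*v - 2*a + 1 ≠ 0) :
    HasDerivAt (fun x => arctan (2*a * √(-a*x^2 + x - 1) / (-a*x - 2*a + 1)))
      (a / ((1 - a*v) * √(-a*v^2 + v - 1))) v := by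
  have hlin : HasDerivAt (fun x => -a*x - 2*a + 1) (-a) v :=
    ((((hasDerivAt_id' v).const_mul (-a)).sub_const (2*a)).add_const 1).congr_deriv (by ring)
  refine (hasDerivAt_arctan_div ((hasDerivAt_sqrt_quadratic a v hpos).const_mul (2*a))
    hlin h1).congr_deriv ?_
  have hav := right_ne_zero_of_mul (mul_one_sub_mul_pos a v hpos).ne'
  have hs := (sqrt_pos.mpr hpos).ne'
  have hs2 := sq_sqrt hpos.le
  set s := √(-a*v^2 + v - 1)
  have hden : (-a*v - 2*a + 1)^2 + (2*a*s)^2 ≠ 0 := by positivity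
  rw [div_eq_div_iff hden (mul_ne_zero hav hs)]
  field_simp
  linear_combination (2*a^2*(1 - a*v) - 4*a^3) * hs2

theorem hasDerivAt_arctan_sqrt_quadratic_div_quadratic (hpos : 0 < -a*v^2 + v - 1) :
    HasDerivAt (fun x => arctan ((x - 2) * √(-a*x^2 + x - 1) / (2*a*x^2 - 2*x + 2)))
      (-(1 / (v * √(-a*v^2 + v - 1)))) v := by
  have hquad : HasDerivAt (fun x => 2*a*x^2 - 2*x + 2) (4*a*v - 2) v :=
    ((((hasDerivAt_pow 2 v).const_mul (2*a)).sub ((hasDerivAt_id' v).const_mul 2)).add_const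
      2).congr_deriv (by ring)
  have hQ : 2*a*v^2 - 2*v + 2 ≠ 0 := by linarith
  refine (hasDerivAt_arctan_div (((hasDerivAt_id' v).sub_const 2).mul
    (hasDerivAt_sqrt_quadratic a v hpos)) hquad hQ).congr_deriv ?_
  have hv := left_ne_zero_of_mul (mul_one_sub_mul_pos a v hpos).ne'
  have hs := (sqrt_pos.mpr hpos).ne'
  have hs2 := sq_sqrt hpos.le
  simp only [Pi.mul_apply]
  set s := √(-a*v^2 + v - 1)
  have hden : (2*a*v^2 - 2*v + 2)^2 + ((v - 2) * s)^2 ≠ 0 := by positivity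
  rw [div_eq_iff hden]
  field_simp
  linear_combination (v * (2 * (v * (v*a - 1) + 1) - (v - 2) * (4*a*v - 2)) + (v - 2)^2) * hs2

end Quadratic

theorem antiderivative_inv_sq_arctan_general (a : ℝ)
    (v : ℝ) (hpos : 0 < -a*v^2 + v - 1)
    (h1 : -a*v - 2*a + 1 ≠ 0) :
    HasDerivAt (fun v : ℝ =>
        (1/(2*v)) * Real.sqrt (-a*v^2 + v - 1)
        - (1/v) * arctan (Real.sqrt (-a*v^2 + v - 1))
        - a/2 * arctan (2*a * Real.sqrt (-a*v^2 + v - 1) / (-a*v - 2*a + 1))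
        + (2*a - 1)/4 *
            arctan ((v - 2) * Real.sqrt (-a*v^2 + v - 1) / (2*a*v^2 - 2*v + 2)))
      ((1/v^2) * arctan (Real.sqrt (-a*v^2 + v - 1))) v := by
  have hvav := (mul_one_sub_mul_pos a v hpos).ne'
  have hv := left_ne_zero_of_mul hvav
  have hsqrt := hasDerivAt_sqrt_quadratic a v hpos
  have hhalf := (hasDerivAt_const v (1 : ℝ)).div ((hasDerivAt_id' v).const_mul 2)
    (mul_ne_zero two_ne_zero hv)
  have hinv := (hasDerivAt_const v (1 : ℝ)).div (hasDerivAt_id' v) hv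
  refine ((((hhalf.mul hsqrt).sub (hinv.mul hsqrt.arctan)).sub
    ((hasDerivAt_arctan_sqrt_quadratic_div_linear a v hpos h1).const_mul (a/2))).add
    ((hasDerivAt_arctan_sqrt_quadratic_div_quadratic a v hpos).const_mul
      ((2*a - 1)/4))).congr_deriv ?_
  have hav : 1 - v*a ≠ 0 := mul_comm a v ▸ right_ne_zero_of_mul hvav
  have hs := (sqrt_pos.mpr hpos).ne'
  have hs2 := sq_sqrt hpos.le
  set s := √(-a*v^2 + v - 1)
  simp only [Pi.div_apply]
  field_simp
  linear_combination 8 * (1 - 2*v*a - (1 - v*a) * (1 + s^2)) * hs2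

theorem antiderivative_inv_sq_arctan (a : ℝ) (ha0 : 0 < a) (ha1 : a < 1/4)
    (v : ℝ) (hpos : 0 < -a*v^2 + v - 1)
    (h1 : -a*v - 2*a + 1 ≠ 0) (h2 : 2*a*v^2 - 2*v + 2 ≠ 0) :
    HasDerivAt (fun v : ℝ =>
        (1/(2*v)) * Real.sqrt (-a*v^2 + v - 1)
        - (1/v) * arctan (Real.sqrt (-a*v^2 + v - 1))
        - a/2 * arctan (2*a * Real.sqrt (-a*v^2 + v - 1) / (-a*v - 2*a + 1))
        + (2*a - 1)/4 *
            arctan ((v - 2) * Real.sqrt (-a*v^2 + v - 1) / (2*a*v^2 - 2*v + 2)))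
      ((1/v^2) * arctan (Real.sqrt (-a*v^2 + v - 1))) v :=
  antiderivative_inv_sq_arctan_general a v hpos h1
end

section
/- For 1/4 < b < 1/2, with r₀ = (1 − 2b − b^{3/2})/(√b(1−b)), one has ∫_{r₀}^1 r·arccos((1 − 3b + b² − b(1−b)r²)/(2b²r)) dr = π(2b³ − 8b² + 6b − 1)/(4(b−1)²b) − (1/2)·arccos(−1 + (4b−1)/(2b²)) + ((1−2b)/(4b(1−b)))·√(4b−1) + ((1−2b)²/(2b(1−b)²))·arctan((1−3b)/((1−b)√(4b−1))). -/
/-!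
Integrating by parts with `g x = (A - C x²) / (D x)` gives
`∫ x arccos g = x² / 2 · arccos g - ∫ x (A + C x²) / (2 √Q)`, where
`Q x = D² x² - (A - C x²)² = (D x)² (1 - g²)`. Since `Q` is a quadratic in `x²` with
completed square `D² (4AC + D²) = (2C² x² - (2AC + D²))² + 4C² Q`, the remaining integral is
an arcsine plus `√Q / (4C)`. For `A = 1 - 3b + b²`, `C = b (1 - b)`, `D = 2b²`, the lower limit
`r₀` solves `g r₀ = 1`, so there `Q = 0` and the arcsine is `-π/2`; at `r = 1` the arcsine is
rewritten as an arctangent.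
-/

open Real intervalIntegral Set

section ChainRule

variable {f : ℝ → ℝ} {f' x : ℝ}

lemma HasDerivAt.arccos_of_sq_lt_one (hf : HasDerivAt f f' x) (h : f x ^ 2 < 1) :
    HasDerivAt (fun y => arccos (f y)) (-f' / √(1 - f x ^ 2)) x := by
  have h₁ : f x ≠ -1 := by intro h'; rw [h'] at h; norm_num at h
  have h₂ : f x ≠ 1 := by intro h'; rw [h'] at h; norm_num at h
  exact ((hasDerivAt_arccos h₁ h₂).comp x hf).congr_deriv (by ring)

lemma HasDerivAt.arcsin_of_sq_lt_one (hf : HasDerivAt f f' x) (h : f x ^ 2 < 1) :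
    HasDerivAt (fun y => arcsin (f y)) (f' / √(1 - f x ^ 2)) x := by
  have h₁ : f x ≠ -1 := by intro h'; rw [h'] at h; norm_num at h
  have h₂ : f x ≠ 1 := by intro h'; rw [h'] at h; norm_num at h
  exact ((hasDerivAt_arcsin h₁ h₂).comp x hf).congr_deriv (by ring)

end ChainRule

lemma arcsin_div_eq_arctan {p q : ℝ} (hq : 0 < q) (hpq : p ^ 2 < q ^ 2) :
    arcsin (p / q) = arctan (p / √(q ^ 2 - p ^ 2)) := by
  have hmem : p / q ∈ Ioo (-1 : ℝ) 1 := by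
    rw [mem_Ioo, lt_div_iff₀ hq, div_lt_one hq]
    constructor <;> nlinarith
  rw [arcsin_eq_arctan hmem, show 1 - (p / q) ^ 2 = (q ^ 2 - p ^ 2) / q ^ 2 by field_simp,
    sqrt_div' _ (by positivity), sqrt_sq hq.le, div_div_div_cancel_right₀ hq.ne']

attribute [local fun_prop] continuous_arccos continuous_arcsin

namespace ArccosIntegral

def discr (A C D x : ℝ) : ℝ := D ^ 2 * x ^ 2 - (A - C * x ^ 2) ^ 2

noncomputable def primitive (A C D x : ℝ) : ℝ :=
  x ^ 2 / 2 * arccos ((A - C * x ^ 2) / (D * x))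
    - (4 * A * C + D ^ 2) / (8 * C ^ 2) *
        arcsin ((2 * C ^ 2 * x ^ 2 - (2 * A * C + D ^ 2)) / (D * √(4 * A * C + D ^ 2)))
    + √(discr A C D x) / (4 * C)

variable {A C D x : ℝ}

lemma one_sub_sq_ratio (hD : D ≠ 0) (hx : x ≠ 0) :
    1 - ((A - C * x ^ 2) / (D * x)) ^ 2 = discr A C D x / (D * x) ^ 2 := by
  unfold discr; field_simp

lemma sq_mul_eq_sq_add_discr (A C D x : ℝ) :
    D ^ 2 * (4 * A * C + D ^ 2) = (2 * C ^ 2 * x ^ 2 - (2 * A * C + D ^ 2)) ^ 2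
      + 4 * C ^ 2 * discr A C D x := by
  unfold discr; ring

lemma four_mul_mul_add_sq_pos (hC : C ≠ 0) (hQ : 0 < discr A C D x) : 0 < 4 * A * C + D ^ 2 := by
  have h := sq_mul_eq_sq_add_discr A C D x
  have : 0 < D ^ 2 * (4 * A * C + D ^ 2) := by rw [h]; positivity
  exact pos_of_mul_pos_right this (sq_nonneg D)

lemma one_sub_sq_arcsin_arg (hD : D ≠ 0) (hK : 0 < 4 * A * C + D ^ 2) :
    1 - ((2 * C ^ 2 * x ^ 2 - (2 * A * C + D ^ 2)) / (D * √(4 * A * C + D ^ 2))) ^ 2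
      = 4 * C ^ 2 * discr A C D x / (D * √(4 * A * C + D ^ 2)) ^ 2 := by
  have hs : √(4 * A * C + D ^ 2) ^ 2 = 4 * A * C + D ^ 2 := sq_sqrt hK.le
  have hq : D * √(4 * A * C + D ^ 2) ≠ 0 := mul_ne_zero hD (sqrt_pos.2 hK).ne'
  rw [div_pow, one_sub_div (pow_ne_zero 2 hq)]
  congr 1
  rw [mul_pow, hs, sq_mul_eq_sq_add_discr A C D x]
  ring

lemma hasDerivAt_discr :
    HasDerivAt (discr A C D) (2 * D ^ 2 * x + 4 * C * x * (A - C * x ^ 2)) x := by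
  unfold discr
  have := ((hasDerivAt_pow 2 x).const_mul (D ^ 2)).sub
    (((hasDerivAt_pow 2 x).const_mul C).const_sub A |>.pow 2)
  exact this.congr_deriv (by push_cast; ring)

lemma hasDerivAt_arccos_ratio (hD : 0 < D) (hx : 0 < x) (hQ : 0 < discr A C D x) :
    HasDerivAt (fun y => arccos ((A - C * y ^ 2) / (D * y)))
      ((A + C * x ^ 2) / (x * √(discr A C D x))) x := by
  have hg : HasDerivAt (fun y => (A - C * y ^ 2) / (D * y)) (-(A + C * x ^ 2) / (D * x ^ 2)) x :=
    ((((hasDerivAt_pow 2 x).const_mul C).const_sub A).div ((hasDerivAt_id' x).const_mul D)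
      (by positivity)).congr_deriv (by field_simp; ring)
  have h1 := one_sub_sq_ratio (A := A) (C := C) hD.ne' hx.ne'
  have hlt : ((A - C * x ^ 2) / (D * x)) ^ 2 < 1 := by
    have : 0 < discr A C D x / (D * x) ^ 2 := by positivity
    linarith
  refine (hg.arccos_of_sq_lt_one hlt).congr_deriv ?_
  rw [h1, sqrt_div' _ (by positivity), sqrt_sq (by positivity)]
  field_simp

lemma hasDerivAt_arcsin_arg (hC : 0 < C) (hD : 0 < D) (hQ : 0 < discr A C D x) :
    HasDerivAt
      (fun y => arcsin ((2 * C ^ 2 * y ^ 2 - (2 * A * C + D ^ 2)) / (D * √(4 * A * C + D ^ 2))))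
      (2 * C * x / √(discr A C D x)) x := by
  have hK := four_mul_mul_add_sq_pos hC.ne' hQ
  have hs : HasDerivAt
      (fun y => (2 * C ^ 2 * y ^ 2 - (2 * A * C + D ^ 2)) / (D * √(4 * A * C + D ^ 2)))
      (4 * C ^ 2 * x / (D * √(4 * A * C + D ^ 2))) x :=
    ((((hasDerivAt_pow 2 x).const_mul (2 * C ^ 2)).sub_const (2 * A * C + D ^ 2)).div_const
      _).congr_deriv (by push_cast; ring)
  have h1 := one_sub_sq_arcsin_arg (x := x) hD.ne' hK
  have hlt : ((2 * C ^ 2 * x ^ 2 - (2 * A * C + D ^ 2)) / (D * √(4 * A * C + D ^ 2))) ^ 2 < 1 := by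
    have : 0 < 4 * C ^ 2 * discr A C D x / (D * √(4 * A * C + D ^ 2)) ^ 2 := by positivity
    linarith
  refine (hs.arcsin_of_sq_lt_one hlt).congr_deriv ?_
  rw [h1, show 4 * C ^ 2 * discr A C D x = (2 * C) ^ 2 * discr A C D x by ring,
    sqrt_div' _ (by positivity), sqrt_mul' _ hQ.le, sqrt_sq (by positivity),
    sqrt_sq (by positivity), div_div_div_cancel_right₀ (by positivity)]
  field_simp
  ring

lemma hasDerivAt_primitive (hC : 0 < C) (hD : 0 < D) (hx : 0 < x) (hQ : 0 < discr A C D x) :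
    HasDerivAt (primitive A C D) (x * arccos ((A - C * x ^ 2) / (D * x))) x := by
  have hx2 : HasDerivAt (fun y : ℝ => y ^ 2 / 2) x x :=
    ((hasDerivAt_pow 2 x).div_const 2).congr_deriv (by ring)
  have := ((hx2.mul (hasDerivAt_arccos_ratio hD hx hQ)).sub
    ((hasDerivAt_arcsin_arg hC hD hQ).const_mul ((4 * A * C + D ^ 2) / (8 * C ^ 2)))).add
    ((hasDerivAt_discr.sqrt hQ.ne').div_const (4 * C))
  exact this.congr_deriv (by field_simp; ring)

lemma discr_pos_of_mem_Ioo {a b : ℝ} (ha : 0 ≤ a) (hx : x ∈ Ioo a b) (hQa : 0 ≤ discr A C D a)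
    (hQb : 0 < discr A C D b) : 0 < discr A C D x := by
  obtain ⟨hax, hxb⟩ := hx
  have hxa : 0 < x ^ 2 - a ^ 2 := by nlinarith
  have hbx : 0 < b ^ 2 - x ^ 2 := by nlinarith
  have hba : 0 < b ^ 2 - a ^ 2 := by linarith
  -- `discr` is a quadratic in `x ^ 2` with leading coefficient `-C ^ 2`: it lies above its chords
  have hinterp : discr A C D x * (b ^ 2 - a ^ 2) = (b ^ 2 - x ^ 2) * discr A C D a
      + (x ^ 2 - a ^ 2) * discr A C D b
      + C ^ 2 * (x ^ 2 - a ^ 2) * (b ^ 2 - x ^ 2) * (b ^ 2 - a ^ 2) := by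
    unfold discr; ring
  have : 0 < discr A C D x * (b ^ 2 - a ^ 2) := by
    rw [hinterp]
    have := mul_nonneg hbx.le hQa
    have := mul_pos hxa hQb
    have : 0 ≤ C ^ 2 * (x ^ 2 - a ^ 2) * (b ^ 2 - x ^ 2) * (b ^ 2 - a ^ 2) := by positivity
    linarith
  exact pos_of_mul_pos_left this hba.le

lemma continuousOn_primitive (hD : D ≠ 0) : ContinuousOn (primitive A C D) (Ioi 0) := by
  have hratio : ContinuousOn (fun y => (A - C * y ^ 2) / (D * y)) (Ioi 0) :=
    ContinuousOn.div (by fun_prop) (by fun_prop) fun y hy => mul_ne_zero hD (ne_of_gt hy)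
  unfold primitive discr
  fun_prop

theorem integral_mul_arccos_ratio {a b : ℝ} (hC : 0 < C) (hD : 0 < D) (ha : 0 < a) (hab : a ≤ b)
    (hQa : 0 ≤ discr A C D a) (hQb : 0 < discr A C D b) :
    ∫ x in a..b, x * arccos ((A - C * x ^ 2) / (D * x))
      = primitive A C D b - primitive A C D a := by
  have hIcc : Icc a b ⊆ Ioi 0 := fun y hy => ha.trans_le hy.1
  refine integral_eq_sub_of_hasDerivAt_of_le hab ((continuousOn_primitive hD.ne').mono hIcc)
    (fun x hx => hasDerivAt_primitive hC hD (ha.trans hx.1)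
      (discr_pos_of_mem_Ioo ha.le hx hQa hQb)) ?_
  refine ContinuousOn.intervalIntegrable ?_
  have hratio : ContinuousOn (fun y => (A - C * y ^ 2) / (D * y)) (Icc a b) :=
    ContinuousOn.div (by fun_prop) (by fun_prop) fun y hy =>
      mul_ne_zero hD.ne' (ha.trans_le hy.1).ne'
  rw [uIcc_of_le hab]
  fun_prop

lemma discr_eq_zero {a : ℝ} (h : A - C * a ^ 2 = D * a) : discr A C D a = 0 := by
  rw [discr, h]; ring

lemma primitive_eq_of_ratio_eq_one {a : ℝ} (hC : 0 < C) (hD : 0 < D) (ha : 0 < a)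
    (h : A - C * a ^ 2 = D * a) : primitive A C D a = π * (4 * A * C + D ^ 2) / (16 * C ^ 2) := by
  obtain rfl : A = C * a ^ 2 + D * a := by linarith
  have hsq : 4 * (C * a ^ 2 + D * a) * C + D ^ 2 = (2 * C * a + D) ^ 2 := by ring
  have harccos : (C * a ^ 2 + D * a - C * a ^ 2) / (D * a) = 1 := by field_simp; ring
  have harcsin : (2 * C ^ 2 * a ^ 2 - (2 * (C * a ^ 2 + D * a) * C + D ^ 2)) /
      (D * √(4 * (C * a ^ 2 + D * a) * C + D ^ 2)) = -1 := by
    rw [hsq, sqrt_sq (by positivity)]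
    field_simp
    ring
  rw [primitive, harccos, harcsin, discr_eq_zero h, arccos_one, arcsin_neg_one, sqrt_zero]
  ring

lemma discr_one (t : ℝ) :
    discr (1 - 3 * t ^ 2 + (t ^ 2) ^ 2) (t ^ 2 * (1 - t ^ 2)) (2 * (t ^ 2) ^ 2) 1
      = (1 - 2 * t ^ 2) ^ 2 * (4 * t ^ 2 - 1) := by
  unfold discr; ring

lemma primitive_one {t : ℝ} (ht : 1 / 2 < t) (ht' : t ^ 2 < 1 / 2) :
    primitive (1 - 3 * t ^ 2 + (t ^ 2) ^ 2) (t ^ 2 * (1 - t ^ 2)) (2 * (t ^ 2) ^ 2) 1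
      = π / 2 - 1 / 2 * arccos (-1 + (4 * t ^ 2 - 1) / (2 * (t ^ 2) ^ 2))
        + (1 - 2 * t ^ 2) ^ 2 / (2 * t ^ 2 * (1 - t ^ 2) ^ 2)
          * arctan ((1 - 3 * t ^ 2) / ((1 - t ^ 2) * √(4 * t ^ 2 - 1)))
        + (1 - 2 * t ^ 2) / (4 * t ^ 2 * (1 - t ^ 2)) * √(4 * t ^ 2 - 1) := by
  have h2t : 0 < 1 - 2 * t ^ 2 := by linarith
  have ht1 : 0 < 1 - t ^ 2 := by linarith
  have h4t : 0 < 4 * t ^ 2 - 1 := by nlinarith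
  have harccos : (1 - 3 * t ^ 2 + (t ^ 2) ^ 2 - t ^ 2 * (1 - t ^ 2) * 1 ^ 2) / (2 * (t ^ 2) ^ 2 * 1)
      = -(-1 + (4 * t ^ 2 - 1) / (2 * (t ^ 2) ^ 2)) := by
    field_simp; ring
  have hK : √(4 * (1 - 3 * t ^ 2 + (t ^ 2) ^ 2) * (t ^ 2 * (1 - t ^ 2)) + (2 * (t ^ 2) ^ 2) ^ 2)
      = 2 * t * (1 - 2 * t ^ 2) := by
    rw [← sqrt_sq (by positivity : 0 ≤ 2 * t * (1 - 2 * t ^ 2))]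
    congr 1; ring
  have harcsin : (2 * (t ^ 2 * (1 - t ^ 2)) ^ 2 * 1 ^ 2 - (2 * (1 - 3 * t ^ 2 + (t ^ 2) ^ 2)
      * (t ^ 2 * (1 - t ^ 2)) + (2 * (t ^ 2) ^ 2) ^ 2))
      / (2 * (t ^ 2) ^ 2 * (2 * t * (1 - 2 * t ^ 2))) = -((1 - 3 * t ^ 2) / (2 * t ^ 3)) := by
    field_simp; ring
  have hgap : (2 * t ^ 3) ^ 2 - (1 - 3 * t ^ 2) ^ 2 = (1 - t ^ 2) ^ 2 * (4 * t ^ 2 - 1) := by ring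
  have hlt : (1 - 3 * t ^ 2) ^ 2 < (2 * t ^ 3) ^ 2 := by
    have : 0 < (1 - t ^ 2) ^ 2 * (4 * t ^ 2 - 1) := by positivity
    linarith
  rw [primitive, harccos, hK, harcsin, discr_one, arccos_neg, arcsin_neg,
    arcsin_div_eq_arctan (by positivity) hlt, hgap, sqrt_mul' _ h4t.le, sqrt_mul' _ h4t.le,
    sqrt_sq ht1.le, sqrt_sq h2t.le]
  field_simp
  ring

end ArccosIntegral

open ArccosIntegral

lemma one_sub_sub_sq_pos {t : ℝ} (h : t ^ 2 < (3 - √5) / 2) : 0 < 1 - t - t ^ 2 := by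
  have h5 : √5 ^ 2 = 5 := sq_sqrt (by norm_num)
  have : t < (√5 - 1) / 2 := by
    nlinarith [sq_nonneg (2 * t - (√5 - 1)), sqrt_nonneg 5]
  nlinarith [sqrt_nonneg 5]

lemma sq_rpow_three_halves {t : ℝ} (ht : 0 ≤ t) : (t ^ 2) ^ ((3 : ℝ) / 2) = t ^ 3 := by
  rw [← rpow_natCast t 2, ← rpow_mul ht]
  norm_num

theorem integral_r_arccos (b : ℝ) (hb1 : 1/4 < b) (hb2 : b < 1/2)
    (hb3 : b < (3 - Real.sqrt 5)/2) :
    (∫ r in ((1 - 2*b - b ^ ((3:ℝ)/2)) / (Real.sqrt b * (1 - b)))..1,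
        r * arccos ((1 - 3*b + b^2 - b*(1 - b)*r^2) / (2*b^2*r))) =
      π*(2*b^3 - 8*b^2 + 6*b - 1)/(4*(b - 1)^2*b)
      - 1/2 * arccos (-1 + (4*b - 1)/(2*b^2))
      + (1 - 2*b)/(4*b*(1 - b)) * Real.sqrt (4*b - 1)
      + (1 - 2*b)^2/(2*b*(1 - b)^2)
          * arctan ((1 - 3*b)/((1 - b) * Real.sqrt (4*b - 1))) := by
  obtain ⟨t, ht, rfl⟩ : ∃ t, 0 < t ∧ b = t ^ 2 :=
    ⟨√b, sqrt_pos.2 (by linarith), (sq_sqrt (by linarith)).symm⟩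
  have ht_half : 1 / 2 < t := by nlinarith
  have ht1 : 0 < 1 - t ^ 2 := by linarith
  have h2t : 0 < 1 - 2 * t ^ 2 := by linarith
  have h4t : 0 < 4 * t ^ 2 - 1 := by linarith
  have hgold := one_sub_sub_sq_pos hb3
  rw [sq_rpow_three_halves ht.le, sqrt_sq ht.le]
  set r₀ := (1 - 2 * t ^ 2 - t ^ 3) / (t * (1 - t ^ 2))
  have hr₀ : 0 < r₀ := div_pos (by nlinarith) (by positivity)
  have hr₀1 : r₀ ≤ 1 := by rw [div_le_one (by positivity)]; nlinarith
  have hroot : 1 - 3 * t ^ 2 + (t ^ 2) ^ 2 - t ^ 2 * (1 - t ^ 2) * r₀ ^ 2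
      = 2 * (t ^ 2) ^ 2 * r₀ := by
    simp only [r₀]; field_simp; ring
  have hC : 0 < t ^ 2 * (1 - t ^ 2) := by positivity
  have hD : 0 < 2 * (t ^ 2) ^ 2 := by positivity
  have hQ1 : 0 < discr (1 - 3 * t ^ 2 + (t ^ 2) ^ 2) (t ^ 2 * (1 - t ^ 2)) (2 * (t ^ 2) ^ 2) 1 := by
    rw [discr_one]; positivity
  rw [integral_mul_arccos_ratio hC hD hr₀ hr₀1 (discr_eq_zero hroot).ge hQ1,
    primitive_eq_of_ratio_eq_one hC hD hr₀ hroot, primitive_one ht_half hb2]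
  have : t ^ 2 - 1 ≠ 0 := by linarith
  field_simp
  ring
end
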